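/- arXiv:1412.3149 — 3 statements merged into one kernel-verified Lean document; each statement's English description precedes it below -/
import Mathlib

section
/- Suppose α > 0, ω > 0 and c = −α√(ω + α²). Then the function u(x,t) = 2α√ω (√(α²+ω) + √ω) e^{x√ω + iωt} / ( α²(e^{2x√ω} − 1) + 2√ω (√(α²+ω) + √ω) e^{2x√ω} ) is a solution of the defocusing NLS in the quarter plane satisfying u(0,t) = α e^{iωt} and u_x(0,t) = c e^{iωt} for all t ≥ 0. In particular, the pair (α e^{iωt}, c e^{iωt}) is admissible for the defocusing NLS. -/
open MeasureTheory Set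

noncomputable section

/-- `u` is a solution of the defocusing NLS equation `i u_t + u_xx - 2|u|^2 u = 0`
in the quarter plane `{x ≥ 0, t ≥ 0}`:
(a) smooth on the quarter plane, with `x ↦ u(x,t)` rapidly decreasing for each `t ≥ 0`;
(b) the equation holds for `x > 0`, `t > 0`;
(c) the `L¹`-norm in `x` grows at most linearly in `t`. -/
def IsNLSQuarterSolution (u : ℝ → ℝ → ℂ) : Prop :=
  ContDiffOn ℝ (⊤ : ℕ∞) (fun p : ℝ × ℝ => u p.1 p.2) (Set.Ici 0 ×ˢ Set.Ici 0) ∧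
  (∀ t ≥ (0:ℝ), ∀ j m : ℕ, ∃ C : ℝ,
      ∀ x ≥ (0:ℝ), (1 + x) ^ j * ‖iteratedDeriv m (fun y => u y t) x‖ ≤ C) ∧
  (∀ x > (0:ℝ), ∀ t > (0:ℝ),
      Complex.I * deriv (fun s => u x s) t
        + deriv (fun y => deriv (fun z => u z t) y) x
        - 2 * (‖u x t‖ : ℂ) ^ 2 * u x t = 0) ∧
  (∃ C > (0:ℝ), ∀ t ≥ (0:ℝ), (∫ x in Set.Ioi (0:ℝ), ‖u x t‖) ≤ C * (1 + t))

/-- The pair `(g₀, g₁)` is admissible for the defocusing NLS on the half-line. -/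
def NLSAdmissible (g₀ g₁ : ℝ → ℂ) : Prop :=
  ∃ u : ℝ → ℝ → ℂ, IsNLSQuarterSolution u ∧
    ∀ t ≥ (0:ℝ), u 0 t = g₀ t ∧ deriv (fun x => u x t) 0 = g₁ t

/-- The explicit solution
`u(x,t) = 2α√ω(√(α²+ω)+√ω) e^{x√ω + iωt} / (α²(e^{2x√ω}-1) + 2√ω(√(α²+ω)+√ω)e^{2x√ω})`. -/
def uExact (α ω : ℝ) : ℝ → ℝ → ℂ := fun x t =>
  ((2 * α * Real.sqrt ω * (Real.sqrt (α ^ 2 + ω) + Real.sqrt ω) : ℝ) : ℂ) *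
      Complex.exp ((x * Real.sqrt ω : ℝ) + Complex.I * ω * t) /
    (((α ^ 2 : ℝ) : ℂ) * (Complex.exp ((2 * x * Real.sqrt ω : ℝ) : ℂ) - 1) +
      ((2 * Real.sqrt ω * (Real.sqrt (α ^ 2 + ω) + Real.sqrt ω) : ℝ) : ℂ) *
        Complex.exp ((2 * x * Real.sqrt ω : ℝ) : ℂ))

namespace NLS
variable (α ω : ℝ)

def ss : ℝ := Real.sqrt ω
def rr : ℝ := Real.sqrt (α ^ 2 + ω)
def Ac : ℝ := α ^ 2
def Kc : ℝ := 2 * Real.sqrt ω * (Real.sqrt (α ^ 2 + ω) + Real.sqrt ω)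
def Bc : ℝ := Ac α + Kc α ω
def Nc : ℝ := α * Kc α ω
def E : ℝ → ℂ := fun x => Complex.exp ((ss ω : ℂ) * x)
def D : ℝ → ℂ := fun x => (Bc α ω : ℂ) * E ω x ^ 2 - (Ac α : ℂ)
def G : ℝ → ℂ := fun x => (Nc α ω : ℂ) * E ω x / D α ω x
def G1 : ℝ → ℂ := fun x =>
  -((Nc α ω : ℂ) * (ss ω : ℂ)) * E ω x * ((Bc α ω : ℂ) * E ω x ^ 2 + (Ac α : ℂ)) / D α ω x ^ 2
def G2 : ℝ → ℂ := fun x =>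
  (Nc α ω : ℂ) * (ss ω : ℂ) ^ 2 * E ω x *
    ((Bc α ω : ℂ) ^ 2 * E ω x ^ 4 + 6 * (Ac α : ℂ) * (Bc α ω : ℂ) * E ω x ^ 2 + (Ac α : ℂ) ^ 2) /
    D α ω x ^ 3
def dr : ℝ → ℝ := fun x => Bc α ω * Real.exp (ss ω * x) ^ 2 - Ac α
def gr : ℝ → ℝ := fun x => Nc α ω * Real.exp (ss ω * x) / dr α ω x
def wE : ℝ → ℂ := fun x => Complex.exp (-(2 * (ss ω : ℂ)) * x)
def e1 : ℝ → ℂ := fun x => Complex.exp (-(ss ω : ℂ) * x)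
def D0 : ℝ → ℂ := fun x => (Bc α ω : ℂ) - (Ac α : ℂ) * wE ω x
def R (t : ℝ) (q : Polynomial ℂ) (m : ℕ) : ℝ → ℂ := fun x =>
  Complex.exp (Complex.I * ω * t) * e1 ω x * q.eval (wE ω x) / D0 α ω x ^ (m + 1)

variable {α ω : ℝ}

/-! ### Real constants -/

lemma hs (hω : 0 < ω) : 0 < ss ω := Real.sqrt_pos.2 hω
lemma ss_sq (hω : 0 < ω) : ss ω ^ 2 = ω := Real.sq_sqrt hω.le
lemma hr (hα : 0 < α) (hω : 0 < ω) : 0 < rr α ω := Real.sqrt_pos.2 (by positivity)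
lemma rr_sq (hα : 0 < α) (hω : 0 < ω) : rr α ω ^ 2 = α ^ 2 + ω := Real.sq_sqrt (by positivity)
lemma hK (hα : 0 < α) (hω : 0 < ω) : 0 < Kc α ω := by
  have h1 := hs hω; have h2 := hr hα hω
  unfold Kc; unfold ss at h1; unfold rr at h2; positivity
lemma hA (hα : 0 < α) : 0 < Ac α := by unfold Ac; positivity
lemma hB (hα : 0 < α) (hω : 0 < ω) : 0 < Bc α ω := by
  have := hK hα hω; have := hA (α := α) hα; unfold Bc; linarith
lemma hN (hα : 0 < α) (hω : 0 < ω) : 0 < Nc α ω := by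
  have := hK hα hω; unfold Nc; positivity

lemma keyK (hα : 0 < α) (hω : 0 < ω) : Kc α ω ^ 2 = 4 * ω * Bc α ω := by
  have h1 := ss_sq (ω := ω) hω
  have h2 := rr_sq hα hω
  unfold Bc Kc Ac; unfold ss at h1; unfold rr at h2
  linear_combination (4*Real.sqrt (α^2+ω)^2 + 8*Real.sqrt ω*Real.sqrt (α^2+ω) + 4*Real.sqrt ω^2 - 4*ω) * h1 + 4*ω*h2

lemma keyN (hα : 0 < α) (hω : 0 < ω) : Nc α ω ^ 2 = 4 * ω * Ac α * Bc α ω := by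
  have h := keyK hα hω
  unfold Nc Ac at *; nlinarith [h]

lemma keyr (hα : 0 < α) (hω : 0 < ω) : ss ω * (Ac α + Bc α ω) = rr α ω * Kc α ω := by
  have h1 := ss_sq (ω := ω) hω
  have h2 := rr_sq hα hω
  unfold Bc Kc Ac; unfold ss at h1 ⊢; unfold rr at h2 ⊢
  linear_combination 2*Real.sqrt ω*h1 - 2*Real.sqrt ω*h2

/-! ### Basic facts about `E`, `D`, `G` -/

lemma wE_ne (x : ℝ) : wE ω x ≠ 0 := Complex.exp_ne_zero _

lemma E_real (x : ℝ) : E ω x = ((Real.exp (ss ω * x) : ℝ) : ℂ) := by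
  rw [Complex.ofReal_exp]; norm_num [E]

lemma D_real (x : ℝ) : D α ω x = ((dr α ω x : ℝ) : ℂ) := by
  rw [D, dr, E_real]; push_cast; ring

lemma dr_ge (hα : 0 < α) (hω : 0 < ω) {x : ℝ} (hx : 0 ≤ x) : Kc α ω ≤ dr α ω x := by
  have h1 : (1:ℝ) ≤ Real.exp (ss ω * x) := by
    rw [Real.one_le_exp_iff]
    have := hs hω; positivity
  have hB := hB hα hω
  have hA := hA (α := α) hα
  have h3 : Bc α ω = Ac α + Kc α ω := rfl
  have h4 : (1:ℝ) ≤ Real.exp (ss ω * x) ^ 2 := by nlinarith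
  show Kc α ω ≤ Bc α ω * Real.exp (ss ω * x) ^ 2 - Ac α
  nlinarith [h3, h4, hB, hA]

lemma dr_ge' (hα : 0 < α) (hω : 0 < ω) {x : ℝ} (hx : 0 ≤ x) :
    Kc α ω * Real.exp (ss ω * x) ^ 2 ≤ dr α ω x := by
  have h1 : (1:ℝ) ≤ Real.exp (ss ω * x) := by
    rw [Real.one_le_exp_iff]
    have := hs hω; positivity
  have hA := hA (α := α) hα
  have h3 : Bc α ω = Ac α + Kc α ω := rfl
  have h2 : (1:ℝ) ≤ Real.exp (ss ω * x) ^ 2 := by nlinarith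
  have h4 : Ac α ≤ Ac α * Real.exp (ss ω * x) ^ 2 := by nlinarith [h2, hA]
  show Kc α ω * Real.exp (ss ω * x) ^ 2 ≤ Bc α ω * Real.exp (ss ω * x) ^ 2 - Ac α
  nlinarith [h3, h4]

lemma dr_pos (hα : 0 < α) (hω : 0 < ω) {x : ℝ} (hx : 0 ≤ x) : 0 < dr α ω x :=
  lt_of_lt_of_le (hK hα hω) (dr_ge hα hω hx)

lemma D_ne (hα : 0 < α) (hω : 0 < ω) {x : ℝ} (hx : 0 ≤ x) : D α ω x ≠ 0 := by
  rw [D_real]; exact_mod_cast (dr_pos hα hω hx).ne'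

lemma G_real (x : ℝ) : G α ω x = ((gr α ω x : ℝ) : ℂ) := by
  rw [G, gr, E_real, D_real]; push_cast; ring

lemma normal_form (x t : ℝ) :
    uExact α ω x t = G α ω x * Complex.exp (Complex.I * ω * t) := by
  have hsplit : Complex.exp ((x * Real.sqrt ω : ℝ) + Complex.I * ω * t)
      = E ω x * Complex.exp (Complex.I * ω * t) := by
    rw [Complex.exp_add, E, ss]; push_cast; ring
  have hden : ((α ^ 2 : ℝ) : ℂ) * (Complex.exp ((2 * x * Real.sqrt ω : ℝ) : ℂ) - 1) +
      ((2 * Real.sqrt ω * (Real.sqrt (α ^ 2 + ω) + Real.sqrt ω) : ℝ) : ℂ) *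
        Complex.exp ((2 * x * Real.sqrt ω : ℝ) : ℂ) = D α ω x := by
    rw [D, E, ← Complex.exp_nat_mul, Bc, Ac, Kc, ss]; push_cast; ring_nf
  have hnum : ((2 * α * Real.sqrt ω * (Real.sqrt (α ^ 2 + ω) + Real.sqrt ω) : ℝ) : ℂ)
      = (Nc α ω : ℂ) := by
    rw [Nc, Kc]; push_cast; ring
  rw [uExact, hsplit, G, ← hden, hnum]; ring

lemma norm_c (t : ℝ) : ‖Complex.exp (Complex.I * ω * t)‖ = 1 := by
  rw [Complex.norm_exp]
  simp

/-! ### Derivatives in `x` -/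

lemma hasDerivAt_E (x : ℝ) : HasDerivAt (E ω) ((ss ω : ℂ) * E ω x) x := by
  have h0 : HasDerivAt (fun y : ℝ => ((y : ℝ) : ℂ)) 1 x := Complex.ofRealCLM.hasDerivAt
  have h2 := (h0.const_mul ((ss ω : ℂ))).cexp
  refine h2.congr_deriv (Eq.symm ?_)
  rw [E]; ring

lemma hasDerivAt_E_pow (n : ℕ) (x : ℝ) :
    HasDerivAt (fun y => E ω y ^ n) ((n : ℂ) * E ω x ^ (n - 1) * ((ss ω : ℂ) * E ω x)) x := by
  have h := (hasDerivAt_pow n (E ω x)).comp x (hasDerivAt_E x)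
  exact h

lemma hasDerivAt_D (x : ℝ) :
    HasDerivAt (D α ω) (2 * (ss ω : ℂ) * (Bc α ω : ℂ) * E ω x ^ 2) x := by
  have h2 := ((hasDerivAt_E_pow (ω := ω) 2 x).const_mul ((Bc α ω : ℂ))).sub_const ((Ac α : ℂ))
  refine h2.congr_deriv (Eq.symm ?_)
  norm_num; ring

lemma hasDerivAt_G (x : ℝ) (hD : D α ω x ≠ 0) : HasDerivAt (G α ω) (G1 α ω x) x := by
  have hnum : HasDerivAt (fun y => (Nc α ω : ℂ) * E ω y) ((Nc α ω : ℂ) * ((ss ω : ℂ) * E ω x)) x :=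
    (hasDerivAt_E x).const_mul _
  have h := hnum.div (hasDerivAt_D x) hD
  refine h.congr_deriv (Eq.symm ?_)
  rw [G1, div_eq_div_iff (pow_ne_zero _ hD) (pow_ne_zero _ hD), D]
  ring

lemma hasDerivAt_G1 (x : ℝ) (hD : D α ω x ≠ 0) : HasDerivAt (G1 α ω) (G2 α ω x) x := by
  have hnum :=
    ((hasDerivAt_E (ω := ω) x).const_mul (-((Nc α ω : ℂ) * (ss ω : ℂ)))).mul
      (((hasDerivAt_E_pow (ω := ω) 2 x).const_mul ((Bc α ω : ℂ))).add_const ((Ac α : ℂ)))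
  have hden : HasDerivAt (fun y => D α ω y ^ 2)
      ((2:ℂ) * D α ω x * (2 * (ss ω : ℂ) * (Bc α ω : ℂ) * E ω x ^ 2)) x := by
    have := (hasDerivAt_pow 2 (D α ω x)).comp x (hasDerivAt_D (α := α) x)
    norm_num [Function.comp] at this
    exact this
  have h := hnum.div hden (pow_ne_zero _ hD)
  refine h.congr_deriv (Eq.symm ?_)
  rw [G2]
  rw [div_eq_div_iff (pow_ne_zero _ hD) (pow_ne_zero 2 (pow_ne_zero 2 hD))]
  rw [D]
  push_cast
  simp only [Pi.mul_apply]
  ring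

lemma continuous_D : Continuous (D α ω) := by
  unfold D E
  fun_prop

lemma isOpen_V : IsOpen {x : ℝ | D α ω x ≠ 0} :=
  isOpen_compl_singleton.preimage (continuous_D)

/-! ### The PDE algebraic identity -/

lemma pde_algebra (hα : 0 < α) (hω : 0 < ω) (x : ℝ) (hD : D α ω x ≠ 0) :
    -(ω:ℂ) * G α ω x + G2 α ω x - 2 * G α ω x ^ 3 = 0 := by
  have hσ : ((ss ω : ℂ)) ^ 2 = (ω : ℂ) := by
    rw [show ((ss ω : ℂ)) ^ 2 = ((ss ω ^ 2 : ℝ) : ℂ) by push_cast; ring, ss_sq hω]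
  have hN2 : (Nc α ω : ℂ) ^ 2 = 4 * (ω:ℂ) * (Ac α : ℂ) * (Bc α ω : ℂ) := by
    rw [show ((Nc α ω : ℂ)) ^ 2 = ((Nc α ω ^ 2 : ℝ) : ℂ) by push_cast; ring, keyN hα hω]
    push_cast; ring
  rw [G, G2, hσ]
  field_simp
  rw [D]
  linear_combination (-(2 * (Nc α ω : ℂ) * E ω x ^ 3)) * hN2

/-! ### Structure of iterated derivatives -/

lemma e1_eq (x : ℝ) : e1 ω x = E ω x * wE ω x := by
  rw [e1, E, wE, ← Complex.exp_add]; ring_nf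
lemma D0_eq (x : ℝ) : D0 α ω x = D α ω x * wE ω x := by
  have h2 : E ω x ^ 2 * wE ω x = 1 := by
    rw [E, wE, ← Complex.exp_nat_mul, ← Complex.exp_add]
    rw [show (2:ℕ) * ((ss ω : ℂ) * x) + -(2 * (ss ω:ℂ)) * x = 0 by push_cast; ring]
    exact Complex.exp_zero
  rw [D0, D]; rw [sub_mul, mul_assoc, h2]; ring
lemma D0_ne (x : ℝ) (hD : D α ω x ≠ 0) : D0 α ω x ≠ 0 := by
  rw [D0_eq]; exact mul_ne_zero hD (wE_ne x)

lemma hasDerivAt_e1 (x : ℝ) : HasDerivAt (e1 ω) (-(ss ω : ℂ) * e1 ω x) x := by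
  have h0 : HasDerivAt (fun y : ℝ => ((y : ℝ) : ℂ)) 1 x := Complex.ofRealCLM.hasDerivAt
  have h2 := (h0.const_mul (-(ss ω : ℂ))).cexp
  refine h2.congr_deriv (Eq.symm ?_)
  rw [e1]; ring

lemma hasDerivAt_wE (x : ℝ) : HasDerivAt (wE ω) (-(2 * (ss ω : ℂ)) * wE ω x) x := by
  have h0 : HasDerivAt (fun y : ℝ => ((y : ℝ) : ℂ)) 1 x := Complex.ofRealCLM.hasDerivAt
  have h2 := (h0.const_mul (-(2 * (ss ω : ℂ)))).cexp
  refine h2.congr_deriv (Eq.symm ?_)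
  rw [wE]; ring

lemma iter_formula (t : ℝ) (m : ℕ) : ∃ q : Polynomial ℂ, ∀ x : ℝ, D α ω x ≠ 0 →
    iteratedDeriv m (fun y => uExact α ω y t) x = R α ω t q m x := by
  induction m with
  | zero =>
    refine ⟨Polynomial.C ((Nc α ω : ℂ)), fun x hD => ?_⟩
    rw [iteratedDeriv_zero, normal_form, R, pow_one, e1_eq, D0_eq, G, Polynomial.eval_C]
    rw [div_mul_eq_mul_div, div_eq_div_iff hD (mul_ne_zero hD (wE_ne x))]
    ring
  | succ m ih =>
    obtain ⟨q, hq⟩ := ih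
    refine ⟨-(Polynomial.C ((ss ω : ℂ))) * ((q + 2 * Polynomial.X * (Polynomial.derivative q)) *
        (Polynomial.C ((Bc α ω : ℂ)) - Polynomial.C ((Ac α : ℂ)) * Polynomial.X) +
        Polynomial.C ((2 * (m+1) : ℂ)) * Polynomial.C ((Ac α : ℂ)) * Polynomial.X * q),
      fun x hD => ?_⟩
    have hD0 : D0 α ω x ≠ 0 := D0_ne x hD
    rw [iteratedDeriv_succ]
    have hmem : {y : ℝ | D α ω y ≠ 0} ∈ nhds x := (isOpen_V).mem_nhds hD
    have heq : iteratedDeriv m (fun y => uExact α ω y t) =ᶠ[nhds x]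
        (fun y => Complex.exp (Complex.I * ω * t) * e1 ω y * q.eval (wE ω y)
          / D0 α ω y ^ (m + 1)) :=
      Filter.eventuallyEq_of_mem hmem (fun y hy => hq y hy)
    rw [heq.deriv_eq]
    have hqw : HasDerivAt (fun y => q.eval (wE ω y))
        (q.derivative.eval (wE ω x) * (-(2 * (ss ω : ℂ)) * wE ω x)) x :=
      (Polynomial.hasDerivAt q (wE ω x)).comp x (hasDerivAt_wE x)
    have hnum : HasDerivAt (fun y => Complex.exp (Complex.I * ω * t) * e1 ω y * q.eval (wE ω y))
        (Complex.exp (Complex.I * ω * t) * (-(ss ω : ℂ) * e1 ω x) * q.eval (wE ω x)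
          + Complex.exp (Complex.I * ω * t) * e1 ω x *
            (q.derivative.eval (wE ω x) * (-(2 * (ss ω : ℂ)) * wE ω x))) x :=
      (((hasDerivAt_e1 x).const_mul (Complex.exp (Complex.I * ω * t)))).mul hqw
    have hD0' : HasDerivAt (D0 α ω) (-((Ac α : ℂ) * (-(2 * (ss ω : ℂ)) * wE ω x))) x := by
      have := ((hasDerivAt_wE (ω := ω) x).const_mul ((Ac α : ℂ))).const_sub ((Bc α ω : ℂ))
      exact this
    have hden : HasDerivAt (fun y => D0 α ω y ^ (m + 1))
        (((m:ℂ) + 1) * D0 α ω x ^ m * (-((Ac α : ℂ) * (-(2 * (ss ω : ℂ)) * wE ω x)))) x := by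
      have h := (hasDerivAt_pow (m+1) (D0 α ω x)).comp x hD0'
      have : ((m+1 : ℕ) : ℂ) = (m:ℂ) + 1 := by push_cast; ring
      refine h.congr_deriv ?_
      rw [Nat.add_sub_cancel, this]
    have hdiv := hnum.div hden (pow_ne_zero _ hD0)
    rw [HasDerivAt.deriv (f := fun y => Complex.exp (Complex.I * ω * t) * e1 ω y * q.eval (wE ω y)
      / D0 α ω y ^ (m + 1)) hdiv]
    simp only [R]
    simp only [Polynomial.eval_mul, Polynomial.eval_add, Polynomial.eval_sub, Polynomial.eval_neg,
      Polynomial.eval_C, Polynomial.eval_X, Polynomial.derivative_mul, Polynomial.eval_ofNat]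
    rw [div_eq_div_iff (pow_ne_zero _ (pow_ne_zero _ hD0)) (pow_ne_zero _ hD0)]
    simp only [D0]
    ring

/-! ### Norm estimates -/

lemma norm_ofReal (r : ℝ) : ‖((r:ℝ):ℂ)‖ = |r| := by
  rw [Complex.norm_real, Real.norm_eq_abs]

lemma e1_real (x : ℝ) : e1 ω x = ((Real.exp (-(ss ω * x)) : ℝ) : ℂ) := by
  rw [e1, Complex.ofReal_exp]; congr 1; push_cast; ring

lemma wE_real (x : ℝ) : wE ω x = ((Real.exp (-(2 * ss ω * x)) : ℝ) : ℂ) := by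
  rw [wE, Complex.ofReal_exp]; congr 1; push_cast; ring

lemma D0_real (x : ℝ) : D0 α ω x = ((Bc α ω - Ac α * Real.exp (-(2 * ss ω * x)) : ℝ) : ℂ) := by
  rw [D0, wE_real]; push_cast; ring

lemma d0r_ge (hα : 0 < α) (hω : 0 < ω) {x : ℝ} (hx : 0 ≤ x) :
    Kc α ω ≤ Bc α ω - Ac α * Real.exp (-(2 * ss ω * x)) := by
  have h1 : Real.exp (-(2 * ss ω * x)) ≤ 1 := by
    rw [Real.exp_le_one_iff]
    have := hs hω; nlinarith
  have hA := hA (α := α) hα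
  have h3 : Bc α ω = Ac α + Kc α ω := rfl
  nlinarith [h1, hA, h3, Real.exp_pos (-(2 * ss ω * x))]

lemma poly_eval_bound (q : Polynomial ℂ) : ∃ M : ℝ, 0 ≤ M ∧ ∀ z : ℂ, ‖z‖ ≤ 1 → ‖q.eval z‖ ≤ M := by
  refine ⟨∑ i ∈ Finset.range (q.natDegree + 1), ‖q.coeff i‖, by positivity, fun z hz => ?_⟩
  rw [Polynomial.eval_eq_sum_range]
  refine le_trans (norm_sum_le _ _) (Finset.sum_le_sum fun i _ => ?_)
  rw [norm_mul]
  calc ‖q.coeff i‖ * ‖z ^ i‖ ≤ ‖q.coeff i‖ * 1 := by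
        refine mul_le_mul_of_nonneg_left ?_ (norm_nonneg _)
        rw [norm_pow]; exact pow_le_one₀ (norm_nonneg _) hz
    _ = ‖q.coeff i‖ := mul_one _

lemma poly_exp_bound (j : ℕ) {s : ℝ} (hs : 0 < s) :
    ∃ C : ℝ, 0 ≤ C ∧ ∀ x : ℝ, 0 ≤ x → (1 + x) ^ j * Real.exp (-(s * x)) ≤ C := by
  set τ := s / (j + 1) with hτdef
  have hτ : 0 < τ := by positivity
  refine ⟨(1 + 1 / τ) ^ j, by positivity, fun x hx => ?_⟩
  have key : 1 + x ≤ (1 + 1 / τ) * Real.exp (τ * x) := by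
    have h1 : τ * x + 1 ≤ Real.exp (τ * x) := Real.add_one_le_exp _
    have h2 : (1:ℝ) ≤ Real.exp (τ * x) := by
      rw [Real.one_le_exp_iff]; positivity
    have h3 : x ≤ Real.exp (τ * x) / τ := by
      rw [le_div_iff₀ hτ]; nlinarith
    have : (1 + 1/τ) * Real.exp (τ * x) = Real.exp (τ * x) + Real.exp (τ * x) / τ := by
      field_simp
    linarith
  have h4 : (1 + x) ^ j ≤ ((1 + 1/τ) * Real.exp (τ * x)) ^ j := by
    apply pow_le_pow_left₀ (by linarith) key
  have h5 : ((1 + 1/τ) * Real.exp (τ * x)) ^ j = (1 + 1/τ)^j * Real.exp (τ * x) ^ j := by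
    rw [mul_pow]
  have h6 : Real.exp (τ * x) ^ j = Real.exp ((j : ℝ) * (τ * x)) := by
    rw [← Real.exp_nat_mul]
  have h7 : Real.exp ((j:ℝ) * (τ * x)) * Real.exp (-(s * x)) = Real.exp ((j:ℝ) * τ * x - s * x) := by
    rw [← Real.exp_add]; ring_nf
  have h8 : (j:ℝ) * τ * x - s * x ≤ 0 := by
    have : (j:ℝ) * τ ≤ s := by
      rw [hτdef, ← mul_div_assoc, div_le_iff₀ (by positivity : (0:ℝ) < (j:ℝ)+1)]
      nlinarith [hs.le]
    nlinarith
  have h9 : Real.exp ((j:ℝ) * τ * x - s * x) ≤ 1 := Real.exp_le_one_iff.2 h8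
  calc (1+x)^j * Real.exp (-(s*x)) ≤ (1 + 1/τ)^j * Real.exp (τ*x)^j * Real.exp (-(s*x)) := by
        rw [← h5]
        exact mul_le_mul_of_nonneg_right h4 (Real.exp_nonneg _)
    _ = (1 + 1/τ)^j * (Real.exp ((j:ℝ)*(τ*x)) * Real.exp (-(s*x))) := by rw [h6]; ring
    _ = (1 + 1/τ)^j * Real.exp ((j:ℝ)*τ*x - s*x) := by rw [h7]
    _ ≤ (1 + 1/τ)^j * 1 := mul_le_mul_of_nonneg_left h9 (by positivity)
    _ = (1 + 1/τ)^j := mul_one _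

lemma decay (hα : 0 < α) (hω : 0 < ω) (t : ℝ) (j m : ℕ) : ∃ C : ℝ,
    ∀ x ≥ (0:ℝ), (1 + x) ^ j * ‖iteratedDeriv m (fun y => uExact α ω y t) x‖ ≤ C := by
  obtain ⟨q, hq⟩ := iter_formula t m
  obtain ⟨M, hM0, hM⟩ := poly_eval_bound q
  obtain ⟨Cj, hCj0, hCj⟩ := poly_exp_bound j (hs hω)
  have hKpos := hK hα hω
  refine ⟨Cj * (M / Kc α ω ^ (m+1)), fun x hx => ?_⟩
  have hD := D_ne hα hω hx
  rw [hq x hD]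
  have hKp : (0:ℝ) < Kc α ω ^ (m+1) := pow_pos hKpos _
  have h1 : ‖e1 ω x‖ = Real.exp (-(ss ω * x)) := by
    rw [e1_real, norm_ofReal, abs_of_pos (Real.exp_pos _)]
  have h2 : ‖q.eval (wE ω x)‖ ≤ M := by
    apply hM
    rw [wE_real, norm_ofReal, abs_of_pos (Real.exp_pos _)]
    rw [Real.exp_le_one_iff]
    have := hs hω; nlinarith
  have h3 : Kc α ω ^ (m+1) ≤ ‖D0 α ω x ^ (m+1)‖ := by
    rw [norm_pow, D0_real, norm_ofReal,
      abs_of_pos (lt_of_lt_of_le hKpos (d0r_ge hα hω hx))]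
    exact pow_le_pow_left₀ hKpos.le (d0r_ge hα hω hx) _
  have hnormR : ‖R α ω t q m x‖ ≤ Real.exp (-(ss ω * x)) * (M / Kc α ω ^ (m+1)) := by
    rw [R, norm_div, norm_mul, norm_mul, norm_c, one_mul, h1, mul_div_assoc]
    apply mul_le_mul_of_nonneg_left ?_ (Real.exp_nonneg _)
    exact div_le_div₀ hM0 h2 hKp h3
  calc (1+x)^j * ‖R α ω t q m x‖
      ≤ (1+x)^j * (Real.exp (-(ss ω * x)) * (M / Kc α ω ^ (m+1))) := by
        apply mul_le_mul_of_nonneg_left hnormR (by positivity)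
    _ = ((1+x)^j * Real.exp (-(ss ω * x))) * (M / Kc α ω ^ (m+1)) := by ring
    _ ≤ Cj * (M / Kc α ω ^ (m+1)) := by
        apply mul_le_mul_of_nonneg_right (hCj x hx) (by positivity)

/-! ### Smoothness -/

lemma smooth (hα : 0 < α) (hω : 0 < ω) :
    ContDiffOn ℝ (⊤ : ℕ∞) (fun p : ℝ × ℝ => uExact α ω p.1 p.2) (Set.Ici 0 ×ˢ Set.Ici 0) := by
  have hfun : (fun p : ℝ × ℝ => uExact α ω p.1 p.2) =
      fun p : ℝ × ℝ => (Nc α ω : ℂ) * E ω p.1 * Complex.exp (Complex.I * ω * p.2) / D α ω p.1 := by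
    funext p; rw [normal_form, G]; ring
  rw [hfun]
  have hexpC : ContDiff ℂ (⊤ : ℕ∞) Complex.exp := Complex.contDiff_exp
  have he1 : ContDiff ℝ (⊤ : ℕ∞) (fun p : ℝ × ℝ => Complex.exp ((ss ω : ℂ) * (p.1 : ℂ))) :=
    (hexpC.restrict_scalars ℝ).comp
      (contDiff_const.mul (Complex.ofRealCLM.contDiff.comp contDiff_fst))
  have he2 : ContDiff ℝ (⊤ : ℕ∞) (fun p : ℝ × ℝ => Complex.exp (Complex.I * (ω : ℂ) * (p.2 : ℂ))) :=
    (hexpC.restrict_scalars ℝ).comp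
      (contDiff_const.mul (Complex.ofRealCLM.contDiff.comp contDiff_snd))
  have hnum : ContDiff ℝ (⊤ : ℕ∞) (fun p : ℝ × ℝ =>
      (Nc α ω : ℂ) * E ω p.1 * Complex.exp (Complex.I * ω * p.2)) := by
    unfold E
    exact (contDiff_const.mul he1).mul he2
  have hden : ContDiff ℝ (⊤ : ℕ∞) (fun p : ℝ × ℝ => D α ω p.1) := by
    unfold D E
    exact (contDiff_const.mul (he1.pow 2)).sub contDiff_const
  have hbig : ContDiffOn ℝ (⊤ : ℕ∞)
      (fun p : ℝ × ℝ => (Nc α ω : ℂ) * E ω p.1 * Complex.exp (Complex.I * ω * p.2) / D α ω p.1)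
      (({x : ℝ | D α ω x ≠ 0} : Set ℝ) ×ˢ (univ : Set ℝ)) :=
    by
      intro p hp
      have h := (hnum.contDiffOn p hp).mul ((hden.contDiffOn p hp).inv hp.1)
      simpa [div_eq_mul_inv] using h
  exact hbig.mono (fun p hp => ⟨D_ne hα hω hp.1, trivial⟩)

/-! ### The PDE -/

lemma pde (hα : 0 < α) (hω : 0 < ω) : ∀ x > (0:ℝ), ∀ t > (0:ℝ),
    Complex.I * deriv (fun s => uExact α ω x s) t
      + deriv (fun y => deriv (fun z => uExact α ω z t) y) x
      - 2 * (‖uExact α ω x t‖ : ℂ) ^ 2 * uExact α ω x t = 0 := by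
  intro x hx t ht
  have hD := D_ne hα hω hx.le
  have hT : deriv (fun s : ℝ => uExact α ω x s) t
      = G α ω x * (Complex.exp (Complex.I * ω * t) * (Complex.I * (ω:ℂ))) := by
    have hfun : (fun s : ℝ => uExact α ω x s)
        = fun s : ℝ => G α ω x * Complex.exp (Complex.I * ω * s) :=
      funext fun s => normal_form x s
    rw [hfun]
    have h0 : HasDerivAt (fun s : ℝ => ((s:ℝ):ℂ)) 1 t := Complex.ofRealCLM.hasDerivAt
    have h2 := ((h0.const_mul (Complex.I * (ω:ℂ))).cexp.const_mul (G α ω x)).deriv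
    rw [h2]; ring
  have hmem : {y : ℝ | D α ω y ≠ 0} ∈ nhds x := isOpen_V.mem_nhds hD
  have hfun2 : (fun z : ℝ => uExact α ω z t)
      = fun z => G α ω z * Complex.exp (Complex.I * ω * t) :=
    funext fun z => normal_form z t
  have heq : deriv (fun z : ℝ => uExact α ω z t) =ᶠ[nhds x]
      (fun y => G1 α ω y * Complex.exp (Complex.I * ω * t)) := by
    apply Filter.eventuallyEq_of_mem hmem
    intro y hy
    rw [hfun2]
    exact ((hasDerivAt_G y hy).mul_const _).deriv
  have h2x : deriv (fun y => deriv (fun z => uExact α ω z t) y) x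
      = G2 α ω x * Complex.exp (Complex.I * ω * t) := by
    rw [heq.deriv_eq]
    exact ((hasDerivAt_G1 x hD).mul_const _).deriv
  have hnorm : ((‖uExact α ω x t‖ : ℝ) : ℂ) ^ 2 = G α ω x ^ 2 := by
    rw [normal_form, norm_mul, norm_c, mul_one, G_real, norm_ofReal]
    rw [← Complex.ofReal_pow, ← Complex.ofReal_pow, sq_abs]
  rw [hT, h2x, hnorm, normal_form]
  have halg := pde_algebra hα hω x hD
  have hI : (Complex.I:ℂ) ^ 2 = -1 := Complex.I_sq
  linear_combination (Complex.exp (Complex.I * ω * t)) * halg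
    + ((ω:ℂ) * G α ω x * Complex.exp (Complex.I * ω * t)) * hI

/-! ### Boundary values -/

lemma E_zero : E ω 0 = 1 := by
  rw [E]; norm_num

lemma D_zero : D α ω 0 = (Kc α ω : ℂ) := by
  rw [D, E_zero, Bc]; push_cast; ring

lemma bc0 (hα : 0 < α) (hω : 0 < ω) (t : ℝ) :
    uExact α ω 0 t = (α:ℂ) * Complex.exp (Complex.I * ω * t) := by
  rw [normal_form]
  congr 1
  rw [G, E_zero, D_zero, mul_one, Nc]
  have hKne : (Kc α ω : ℂ) ≠ 0 := by exact_mod_cast (hK hα hω).ne'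
  push_cast
  field_simp

lemma bc1 (hα : 0 < α) (hω : 0 < ω) (t : ℝ) :
    deriv (fun x => uExact α ω x t) 0
      = (-(α:ℂ) * ((Real.sqrt (ω + α^2) : ℝ) : ℂ)) * Complex.exp (Complex.I * ω * t) := by
  have hD := D_ne hα hω (le_refl (0:ℝ))
  have hfun : (fun x => uExact α ω x t)
      = fun x => G α ω x * Complex.exp (Complex.I * ω * t) :=
    funext fun z => normal_form z t
  rw [hfun, ((hasDerivAt_G 0 hD).mul_const _).deriv]
  congr 1
  rw [G1, E_zero, D_zero]
  have hrr : Real.sqrt (ω + α^2) = rr α ω := by rw [rr, add_comm]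
  rw [hrr]
  have hid : Nc α ω * ss ω * (Bc α ω + Ac α) = α * rr α ω * Kc α ω ^ 2 := by
    have h := keyr hα hω
    rw [Nc]
    linear_combination (α * Kc α ω) * h
  have hidC : (Nc α ω : ℂ) * (ss ω : ℂ) * ((Bc α ω : ℂ) + (Ac α : ℂ))
      = (α:ℂ) * (rr α ω : ℂ) * (Kc α ω : ℂ) ^ 2 := by exact_mod_cast hid
  have hKne : (Kc α ω : ℂ) ≠ 0 := by exact_mod_cast (hK hα hω).ne'
  rw [div_eq_iff (pow_ne_zero 2 hKne)]
  linear_combination -hidC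

/-! ### Integral bound -/

lemma intbound (hα : 0 < α) (hω : 0 < ω) : ∃ C > (0:ℝ), ∀ t ≥ (0:ℝ),
    (∫ x in Set.Ioi (0:ℝ), ‖uExact α ω x t‖) ≤ C * (1 + t) := by
  have hKpos := hK hα hω
  have hNpos := hN hα hω
  set h : ℝ → ℝ := fun x => (Nc α ω / Kc α ω) * Real.exp (-(ss ω) * x) with hh
  have hint : IntegrableOn h (Set.Ioi (0:ℝ)) :=
    (exp_neg_integrableOn_Ioi 0 (hs hω)).const_mul _
  have hI0 : 0 ≤ ∫ x in Set.Ioi (0:ℝ), h x := by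
    apply integral_nonneg
    intro x
    rw [hh]
    positivity
  refine ⟨(∫ x in Set.Ioi (0:ℝ), h x) + 1, by linarith, fun t ht => ?_⟩
  have hb : ∀ x ∈ Set.Ioi (0:ℝ), ‖uExact α ω x t‖ ≤ h x := by
    intro x hx
    have hx0 : (0:ℝ) ≤ x := le_of_lt hx
    rw [normal_form, norm_mul, norm_c, mul_one, G_real, norm_ofReal]
    have hdr := dr_pos hα hω hx0
    have hgr0 : 0 ≤ gr α ω x := div_nonneg (by positivity) hdr.le
    rw [abs_of_nonneg hgr0, gr]
    have hd' := dr_ge' hα hω hx0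
    have hexp := Real.exp_pos (ss ω * x)
    calc Nc α ω * Real.exp (ss ω * x) / dr α ω x
        ≤ Nc α ω * Real.exp (ss ω * x) / (Kc α ω * Real.exp (ss ω * x) ^ 2) := by
          gcongr
      _ = h x := by
          show Nc α ω * Real.exp (ss ω * x) / (Kc α ω * Real.exp (ss ω * x) ^ 2)
              = Nc α ω / Kc α ω * Real.exp (-ss ω * x)
          have hne : Real.exp (ss ω * x) ≠ 0 := hexp.ne'
          have hKne : Kc α ω ≠ 0 := hKpos.ne'
          rw [neg_mul, Real.exp_neg]
          field_simp
  have hmono := integral_mono_of_nonneg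
    (Filter.Eventually.of_forall fun x => norm_nonneg _) hint
    ((ae_restrict_iff' measurableSet_Ioi).2 (Filter.Eventually.of_forall hb))
  have hfin : (∫ x in Set.Ioi (0:ℝ), h x) + 1 ≤ ((∫ x in Set.Ioi (0:ℝ), h x) + 1) * (1 + t) := by
    nlinarith
  calc (∫ x in Set.Ioi (0:ℝ), ‖uExact α ω x t‖) ≤ ∫ x in Set.Ioi (0:ℝ), h x := hmono
    _ ≤ (∫ x in Set.Ioi (0:ℝ), h x) + 1 := by linarith
    _ ≤ ((∫ x in Set.Ioi (0:ℝ), h x) + 1) * (1 + t) := hfin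

end NLS

/-- For `α > 0`, `ω > 0` and `c = -α√(ω+α²)`, the explicit function `uExact α ω` is a
solution of the defocusing NLS in the quarter plane with boundary values
`u(0,t) = α e^{iωt}`, `u_x(0,t) = c e^{iωt}` for all `t ≥ 0`; in particular the pair
`(α e^{iωt}, c e^{iωt})` is admissible. -/
theorem explicit_solution_is_admissible (α ω : ℝ) (hα : 0 < α) (hω : 0 < ω)
    (c : ℂ) (hc : c = -(α : ℂ) * (Real.sqrt (ω + α ^ 2) : ℂ)) :
    IsNLSQuarterSolution (uExact α ω) ∧
    (∀ t ≥ (0:ℝ),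
      uExact α ω 0 t = (α : ℂ) * Complex.exp (Complex.I * ω * t) ∧
      deriv (fun x => uExact α ω x t) 0 = c * Complex.exp (Complex.I * ω * t)) ∧
    NLSAdmissible (fun t => (α : ℂ) * Complex.exp (Complex.I * ω * t))
      (fun t => c * Complex.exp (Complex.I * ω * t)) := by
  have hsol : IsNLSQuarterSolution (uExact α ω) :=
    ⟨NLS.smooth hα hω, fun t _ j m => NLS.decay hα hω t j m, NLS.pde hα hω,
      NLS.intbound hα hω⟩
  have hbv : ∀ t ≥ (0:ℝ),
      uExact α ω 0 t = (α : ℂ) * Complex.exp (Complex.I * ω * t) ∧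
      deriv (fun x => uExact α ω x t) 0 = c * Complex.exp (Complex.I * ω * t) := by
    intro t _
    refine ⟨NLS.bc0 hα hω t, ?_⟩
    rw [NLS.bc1 hα hω t, hc]
  exact ⟨hsol, hbv, ⟨uExact α ω, hsol, hbv⟩⟩

end
end

section
/- Let τ > 0 and let g₀ᵇ, g₁ᵇ : [0,∞) → ℂ be smooth functions which are periodic with period τ. Then the pair (g₀ᵇ, g₁ᵇ) is eventually admissible for the defocusing NLS if and only if it is admissible. (In particular, if u is a solution of the defocusing NLS in the quarter plane with u(0,t) = g₀ᵇ(t) and u_x(0,t) = g₁ᵇ(t) for all t ≥ t₀, and n is an integer with nτ > t₀, then v(x,t) := u(x, t + nτ) is a solution of the defocusing NLS in the quarter plane with v(0,t) = g₀ᵇ(t) and v_x(0,t) = g₁ᵇ(t) for all t ≥ 0.) -/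
open MeasureTheory Set

noncomputable section

/-- The pair `(g₀, g₁)` is eventually admissible for the defocusing NLS on the half-line. -/
def NLSEventuallyAdmissible (g₀ g₁ : ℝ → ℂ) : Prop :=
  ∃ u : ℝ → ℝ → ℂ, IsNLSQuarterSolution u ∧
    ∃ t₀ > (0:ℝ), ∀ t ≥ t₀, u 0 t = g₀ t ∧ deriv (fun x => u x t) 0 = g₁ t

/-- For smooth `τ`-periodic boundary functions, eventual admissibility for the defocusing
NLS is equivalent to admissibility. -/
theorem periodic_eventually_admissible_iff_admissible
    (τ : ℝ) (hτ : 0 < τ) (g₀ g₁ : ℝ → ℂ)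
    (hg₀ : ContDiff ℝ (⊤ : ℕ∞) g₀) (hg₁ : ContDiff ℝ (⊤ : ℕ∞) g₁)
    (hper₀ : ∀ t : ℝ, g₀ (t + τ) = g₀ t) (hper₁ : ∀ t : ℝ, g₁ (t + τ) = g₁ t) :
    NLSEventuallyAdmissible g₀ g₁ ↔ NLSAdmissible g₀ g₁ := by
  constructor
  · rintro ⟨u, hu, t₀, ht₀, hb⟩
    -- choose n with n * τ ≥ t₀
    obtain ⟨n, hn⟩ := exists_nat_ge (t₀ / τ)
    set s : ℝ := (n : ℝ) * τ with hs_def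
    have hst₀ : t₀ ≤ s := by
      have := (div_le_iff₀ hτ).mp hn
      linarith
    have hs0 : (0:ℝ) ≤ s := le_trans (le_of_lt ht₀) hst₀
    have hP₀ : Function.Periodic g₀ τ := hper₀
    have hP₁ : Function.Periodic g₁ τ := hper₁
    have hg₀s : ∀ t : ℝ, g₀ (t + s) = g₀ t := fun t => (hP₀.nat_mul n) t
    have hg₁s : ∀ t : ℝ, g₁ (t + s) = g₁ t := fun t => (hP₁.nat_mul n) t
    refine ⟨fun x t => u x (t + s), ?_, ?_⟩
    · obtain ⟨h₁, h₂, h₃, C, hC, h₄⟩ := hu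
      refine ⟨?_, ?_, ?_, ?_⟩
      · have hshift : ContDiff ℝ (⊤ : ℕ∞) (fun p : ℝ × ℝ => (p.1, p.2 + s)) :=
          contDiff_fst.prodMk (contDiff_snd.add contDiff_const)
        exact h₁.comp hshift.contDiffOn (fun p hp => ⟨hp.1, add_nonneg hp.2 hs0⟩)
      · intro t ht j m
        exact h₂ (t + s) (add_nonneg ht hs0) j m
      · intro x hx t ht
        have hds : deriv (fun r => u x (r + s)) t = deriv (fun r => u x r) (t + s) :=
          deriv_comp_add_const (fun r => u x r) s t
        have := h₃ x hx (t + s) (by linarith)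
        simpa [hds] using this
      · refine ⟨C * (1 + s), by nlinarith, fun t ht => ?_⟩
        have := h₄ (t + s) (add_nonneg ht hs0)
        calc (∫ x in Set.Ioi (0:ℝ), ‖u x (t + s)‖) ≤ C * (1 + (t + s)) := this
          _ ≤ C * (1 + s) * (1 + t) := by nlinarith [mul_nonneg (mul_nonneg hC.le hs0) ht]
    · intro t ht
      obtain ⟨e₀, e₁⟩ := hb (t + s) (by linarith)
      constructor
      · show u 0 (t + s) = g₀ t
        rw [e₀, hg₀s]
      · show deriv (fun x => u x (t + s)) 0 = g₁ t
        rw [e₁, hg₁s]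
  · rintro ⟨u, hu, hb⟩
    exact ⟨u, hu, τ, hτ, fun t ht => hb t (le_trans (le_of_lt hτ) ht)⟩

end
end

section
/- Let φ : ℝ → ℝ be continuous, bounded and in L¹(ℝ), and define a(k) = exp( −(1/(2πi)) ∫_ℝ φ(s)/(s − k) ds ) for Im k > 0. Then for every x ∈ ℝ, lim_{ε→0⁺} |a(x + iε)|² = e^{−φ(x)}. In particular, if Q : ℝ → ℂ is continuous with sup|Q| < 1 and φ(s) = log(1 − |Q(s)|²) is in L¹(ℝ), then the boundary values of a satisfy |a(x)|² = 1/(1 − |Q(x)|²) for x ∈ ℝ, and hence (setting b = Q·a on ℝ) the boundary values satisfy |a(x)|² − |b(x)|² = 1. -/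
/-!
For `Im k > 0` the Cauchy integral `∫ φ(s)/(s - k) ds` converges absolutely, and at
`k = x + iε` its imaginary part is the Poisson integral `∫ φ(s) ε/((s-x)² + ε²) ds`. Since
`-1/(2πi) = i/(2π)`, this gives `|a(x + iε)|² = exp(-(1/π) ∫ φ(s) ε/((s-x)² + ε²) ds)`.
Rescaling `s = x + εt` turns the Poisson integral into `∫ φ(x + εt)/(1 + t²) dt`, which tends
to `π φ(x)` by dominated convergence.
-/

open MeasureTheory Complex Filter Set Topology

theorem integral_mul_poisson_kernel_eq (φ : ℝ → ℝ) (x : ℝ) {ε : ℝ} (hε : 0 < ε) :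
    ∫ s : ℝ, φ s * (ε / ((s - x) ^ 2 + ε ^ 2)) = ∫ t : ℝ, φ (x + ε * t) * (1 + t ^ 2)⁻¹ := by
  have h_rescale := Measure.integral_comp_mul_left (fun u ↦ φ (x + u) * (ε / (u ^ 2 + ε ^ 2))) ε
  have h_shift := integral_add_left_eq_self (μ := volume)
    (fun s ↦ φ s * (ε / ((s - x) ^ 2 + ε ^ 2))) x
  simp only [add_sub_cancel_left] at h_shift
  have h_kernel (t : ℝ) : φ (x + ε * t) * (ε / ((ε * t) ^ 2 + ε ^ 2))
      = ε⁻¹ * (φ (x + ε * t) * (1 + t ^ 2)⁻¹) := by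
    field_simp
    ring
  simp only [h_kernel, integral_const_mul, abs_inv, abs_of_pos hε, smul_eq_mul, h_shift]
    at h_rescale
  exact (mul_left_cancel₀ (inv_ne_zero hε.ne') h_rescale).symm

theorem tendsto_integral_mul_poisson_kernel {φ : ℝ → ℝ} (hφ : Continuous φ) {M : ℝ}
    (hM : ∀ s, |φ s| ≤ M) (x : ℝ) :
    Tendsto (fun ε : ℝ ↦ ∫ s : ℝ, φ s * (ε / ((s - x) ^ 2 + ε ^ 2)))
      (𝓝[>] 0) (𝓝 (Real.pi * φ x)) := by
  have h_limit : ∫ t : ℝ, φ x * (1 + t ^ 2)⁻¹ = Real.pi * φ x := by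
    rw [integral_const_mul, integral_univ_inv_one_add_sq, mul_comm]
  have h_ne (t : ℝ) : 1 + t ^ 2 ≠ 0 := by positivity
  rw [← h_limit]
  refine Tendsto.congr' (eventually_nhdsWithin_of_forall fun ε hε ↦
    (integral_mul_poisson_kernel_eq φ x hε).symm) ?_
  refine tendsto_integral_filter_of_dominated_convergence (fun t ↦ M * (1 + t ^ 2)⁻¹)
    (.of_forall fun ε ↦
      (by fun_prop (disch := exact h_ne) : Continuous _).aestronglyMeasurable) ?_
    (integrable_inv_one_add_sq.const_mul M) (ae_of_all _ fun t ↦ ?_)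
  · refine .of_forall fun ε ↦ ae_of_all _ fun t ↦ ?_
    rw [norm_mul, Real.norm_eq_abs, Real.norm_of_nonneg (by positivity)]
    exact mul_le_mul_of_nonneg_right (hM _) (by positivity)
  · have h_cont : Continuous fun ε : ℝ ↦ φ (x + ε * t) * (1 + t ^ 2)⁻¹ := by fun_prop
    simpa using h_cont.continuousWithinAt (s := Ioi 0) (x := 0) |>.tendsto

theorem integrable_ofReal_div_ofReal_sub {φ : ℝ → ℝ} (hφ : Integrable φ) {k : ℂ}
    (hk : k.im ≠ 0) : Integrable fun s : ℝ ↦ (φ s : ℂ) / ((s : ℂ) - k) := by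
  have h_ne (s : ℝ) : (s : ℂ) - k ≠ 0 := fun h ↦ hk (by simpa using congrArg Complex.im h)
  simp_rw [div_eq_inv_mul]
  refine hφ.ofReal.bdd_mul (c := |k.im|⁻¹) (by fun_prop (disch := exact h_ne _))
    (ae_of_all _ fun s ↦ ?_)
  rw [norm_inv]
  refine inv_anti₀ (abs_pos.mpr hk) ?_
  simpa using abs_im_le_norm ((s : ℂ) - k)

theorem im_ofReal_div_ofReal_sub (c s x ε : ℝ) :
    ((c : ℂ) / ((s : ℂ) - (x + ε * I))).im = c * (ε / ((s - x) ^ 2 + ε ^ 2)) := by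
  simp only [div_im, normSq_apply, ofReal_re, ofReal_im, sub_re, sub_im, add_re, add_im,
    mul_re, mul_im, I_re, I_im]
  ring

theorem norm_exp_neg_div_two_pi_I_mul_sq (z : ℂ) :
    ‖exp (-(1 / (2 * Real.pi * I)) * z)‖ ^ 2 = Real.exp (-z.im / Real.pi) := by
  have h_coeff : -(1 / (2 * (Real.pi : ℂ) * I)) = ((2 * Real.pi)⁻¹ : ℝ) * I := by
    rw [one_div, mul_inv, inv_I]
    push_cast
    ring
  rw [norm_exp, h_coeff, mul_assoc, re_ofReal_mul, I_mul_re, ← Real.exp_nat_mul]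
  congr 1
  field_simp
  ring

theorem norm_exp_cauchy_integral_sq {φ : ℝ → ℝ} (hφ : Integrable φ) (x : ℝ) {ε : ℝ}
    (hε : 0 < ε) :
    ‖exp (-(1 / (2 * Real.pi * I)) * ∫ s : ℝ, (φ s : ℂ) / ((s : ℂ) - (x + ε * I)))‖ ^ 2
      = Real.exp (-(∫ s : ℝ, φ s * (ε / ((s - x) ^ 2 + ε ^ 2))) / Real.pi) := by
  have h_int := integrable_ofReal_div_ofReal_sub hφ (k := x + ε * I) (by simpa using hε.ne')
  rw [norm_exp_neg_div_two_pi_I_mul_sq, ← imCLM_apply, ← imCLM.integral_comp_comm h_int]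
  simp only [imCLM_apply, im_ofReal_div_ofReal_sub]

/-- Let `φ : ℝ → ℝ` be continuous, bounded and integrable, and define
`a(k) = exp(-(1/(2πi)) ∫_ℝ φ(s)/(s-k) ds)` for `Im k > 0`. Then for every `x ∈ ℝ`,
`|a(x+iε)|² → e^{-φ(x)}` as `ε → 0⁺`. In particular, if `Q : ℝ → ℂ` is continuous with
`sup|Q| < 1` and `φ(s) = log(1-|Q(s)|²)`, then the boundary values of `a` satisfy
`|a(x)|² = 1/(1-|Q(x)|²)`, and (with `b = Q·a` on `ℝ`) `|a(x)|² - |b(x)|² = 1`. -/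
theorem a_boundary_values
    (φ : ℝ → ℝ) (hφcont : Continuous φ) (hφbdd : ∃ M : ℝ, ∀ s : ℝ, |φ s| ≤ M)
    (hφint : Integrable φ (volume : Measure ℝ))
    (a : ℂ → ℂ)
    (ha : a = fun k =>
      Complex.exp (-(1 / (2 * Real.pi * Complex.I)) * ∫ s : ℝ, (φ s : ℂ) / ((s : ℂ) - k))) :
    (∀ x : ℝ,
      Tendsto (fun ε : ℝ => ‖a ((x : ℂ) + ε * Complex.I)‖ ^ 2)
        (nhdsWithin 0 (Set.Ioi 0)) (nhds (Real.exp (-φ x)))) ∧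
    (∀ Q : ℝ → ℂ, Continuous Q → (∃ M : ℝ, M < 1 ∧ ∀ s : ℝ, ‖Q s‖ ≤ M) →
      (φ = fun s => Real.log (1 - ‖Q s‖ ^ 2)) →
      ∀ x : ℝ,
        Tendsto (fun ε : ℝ => ‖a ((x : ℂ) + ε * Complex.I)‖ ^ 2)
          (nhdsWithin 0 (Set.Ioi 0)) (nhds (1 / (1 - ‖Q x‖ ^ 2))) ∧
        Tendsto (fun ε : ℝ =>
            ‖a ((x : ℂ) + ε * Complex.I)‖ ^ 2 - ‖Q x * a ((x : ℂ) + ε * Complex.I)‖ ^ 2)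
          (nhdsWithin 0 (Set.Ioi 0)) (nhds 1)) := by
  obtain ⟨M, hM⟩ := hφbdd
  have h_boundary (x : ℝ) : Tendsto (fun ε : ℝ ↦ ‖a (x + ε * I)‖ ^ 2) (𝓝[>] 0)
      (𝓝 (Real.exp (-φ x))) := by
    have h_exp := ((tendsto_integral_mul_poisson_kernel hφcont hM x).neg.div_const Real.pi).rexp
    rw [neg_div, mul_div_cancel_left₀ _ Real.pi_ne_zero] at h_exp
    refine h_exp.congr' (eventually_nhdsWithin_of_forall fun ε hε ↦ ?_)
    rw [ha]
    exact (norm_exp_cauchy_integral_sq hφint x hε).symm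
  refine ⟨h_boundary, fun Q _ ⟨MQ, hMQ, hQ⟩ hφQ x ↦ ?_⟩
  have h_pos : 0 < 1 - ‖Q x‖ ^ 2 := by nlinarith [norm_nonneg (Q x), hQ x]
  have h_abs_sq := h_boundary x
  rw [hφQ, Real.exp_neg, Real.exp_log h_pos, ← one_div] at h_abs_sq
  refine ⟨h_abs_sq, ?_⟩
  have h_diff := h_abs_sq.const_mul (1 - ‖Q x‖ ^ 2)
  rw [mul_one_div_cancel h_pos.ne'] at h_diff
  refine h_diff.congr fun ε ↦ ?_
  rw [norm_mul, mul_pow]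
  ring
end
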